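/- arXiv:1409.4308 — 3 statements merged into one kernel-verified Lean document; each statement's English description precedes it below -/
import Mathlib

section
/- The norm on the unitization c₀⁺ = K ⊕ c₀, given by ‖(α,a)‖ = max(|α|, ‖a‖_∞), is power multiplicative: for every (α, a) ∈ c₀⁺ and every k ≥ 1, ‖(α,a)^k‖ = ‖(α,a)‖^k. -/
open Filter

/-- Multiplication on the unitization `c₀⁺ = K ⊕ c₀`:
`(α,μ)·(β,ν) = (αβ, αν + βμ + μν)` (pointwise operations on sequences). -/
def czeroUnitMul {K : Type*} [NontriviallyNormedField K] (p q : K × (ℕ → K)) : K × (ℕ → K) :=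
  (p.1 * q.1, fun n => p.1 * q.2 n + q.1 * p.2 n + p.2 n * q.2 n)

/-- Powers in the unitization, with unit `(1, 0)`. -/
def czeroUnitPow {K : Type*} [NontriviallyNormedField K] (p : K × (ℕ → K)) : ℕ → K × (ℕ → K)
  | 0 => (1, 0)
  | k + 1 => czeroUnitMul (czeroUnitPow p k) p

/-- The norm `‖(α,a)‖ = max(|α|, ‖a‖_∞)` on the unitization `c₀⁺`. -/
noncomputable def czeroUnitNorm {K : Type*} [NontriviallyNormedField K] (p : K × (ℕ → K)) : ℝ :=
  max ‖p.1‖ (⨆ n, ‖p.2 n‖)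

/-! In coordinate `n` the element `(α, a)` acts as `α + a n`, so `(α, a)^k = (α^k, (α + a)^k - α^k)`.
Coordinatewise, the ultrametric inequality bounds `‖(α + x)^k - α^k‖` by `max ‖α‖ ‖x‖ ^ k`, and when
`‖α‖ < ‖x‖` all triangles being isosceles makes it equal to `‖x‖^k`; either way
`max (‖α‖^k) ‖(α + x)^k - α^k‖ = (max ‖α‖ ‖x‖)^k`. Taking the supremum over the coordinates, and using
that `t ↦ t^k` commutes with suprema of nonnegative reals, gives the theorem. -/

lemma IsUltrametricDist.norm_sub_le_max {S : Type*} [SeminormedAddGroup S] [IsUltrametricDist S]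
    (x y : S) : ‖x - y‖ ≤ max ‖x‖ ‖y‖ := by
  simpa only [sub_eq_add_neg, norm_neg] using norm_add_le_max x (-y)

section Ultrametric

variable {K : Type*} [NormedDivisionRing K] [IsUltrametricDist K]

lemma norm_add_pow_sub_pow_le (α x : K) (k : ℕ) : ‖(α + x) ^ k - α ^ k‖ ≤ max ‖α‖ ‖x‖ ^ k :=
  calc ‖(α + x) ^ k - α ^ k‖ ≤ max (‖α + x‖ ^ k) (‖α‖ ^ k) := by
        simpa only [norm_pow] using IsUltrametricDist.norm_sub_le_max ((α + x) ^ k) (α ^ k)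
    _ ≤ max ‖α‖ ‖x‖ ^ k := max_le (by gcongr; exact IsUltrametricDist.norm_add_le_max α x)
        (by gcongr; exact le_max_left _ _)

lemma norm_add_pow_sub_pow_of_norm_lt {α x : K} (h : ‖α‖ < ‖x‖) {k : ℕ} (hk : k ≠ 0) :
    ‖(α + x) ^ k - α ^ k‖ = ‖x‖ ^ k := by
  have hαx : ‖α + x‖ = ‖x‖ := by
    rw [IsUltrametricDist.norm_add_eq_max_of_norm_ne_norm h.ne, max_eq_right h.le]
  have hlt : ‖α ^ k‖ < ‖(α + x) ^ k‖ := by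
    simpa only [norm_pow, hαx] using pow_lt_pow_left₀ h (norm_nonneg α) hk
  rw [sub_eq_add_neg,
    IsUltrametricDist.norm_add_eq_max_of_norm_ne_norm (by rw [norm_neg]; exact hlt.ne'),
    norm_neg, max_eq_left hlt.le, norm_pow, hαx]

lemma max_norm_pow_norm_add_pow_sub_pow (α x : K) (k : ℕ) :
    max (‖α‖ ^ k) ‖(α + x) ^ k - α ^ k‖ = max ‖α‖ ‖x‖ ^ k := by
  rcases eq_or_ne k 0 with rfl | hk
  · simp
  rcases le_or_gt ‖x‖ ‖α‖ with hle | hlt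
  · rw [max_eq_left hle, max_eq_left]
    simpa only [max_eq_left hle] using norm_add_pow_sub_pow_le α x k
  · rw [max_eq_right hlt.le, norm_add_pow_sub_pow_of_norm_lt hlt hk, max_eq_right]
    exact pow_le_pow_left₀ (norm_nonneg α) hlt.le k

end Ultrametric

section Unitization

variable {K : Type*} [NontriviallyNormedField K]

lemma czeroUnitPow_mk (α : K) (a : ℕ → K) (k : ℕ) :
    czeroUnitPow (α, a) k = (α ^ k, fun n => (α + a n) ^ k - α ^ k) := by
  induction k with
  | zero => ext n <;> simp [czeroUnitPow]
  | succ k ih =>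
    rw [czeroUnitPow, ih, czeroUnitMul]
    ext n
    · exact (pow_succ α k).symm
    · ring

lemma czeroUnitNorm_eq_iSup (p : K × (ℕ → K))
    (hp : BddAbove (Set.range fun n => max ‖p.1‖ ‖p.2 n‖)) :
    czeroUnitNorm p = ⨆ n, max ‖p.1‖ ‖p.2 n‖ := by
  have hp2 : BddAbove (Set.range fun n => ‖p.2 n‖) :=
    hp.range_mono _ fun n => le_max_right _ _
  rw [czeroUnitNorm, ciSup_sup_eq (by simp) hp2, ciSup_const]

end Unitization

theorem czeroUnit_norm_pow_general {K : Type*} [NontriviallyNormedField K] [IsUltrametricDist K]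
    (α : K) (a : ℕ → K) (ha : Tendsto a atTop (nhds 0)) (k : ℕ) :
    czeroUnitNorm (czeroUnitPow (α, a) k) = czeroUnitNorm (α, a) ^ k := by
  have hmax : Tendsto (fun n => max ‖α‖ ‖a n‖) atTop (nhds (max ‖α‖ 0)) :=
    tendsto_const_nhds.max (by simpa using ha.norm)
  have hkey (n : ℕ) : max ‖α ^ k‖ ‖(α + a n) ^ k - α ^ k‖ = max ‖α‖ ‖a n‖ ^ k := by
    rw [norm_pow, max_norm_pow_norm_add_pow_sub_pow]
  rw [czeroUnitNorm_eq_iSup (α, a) hmax.bddAbove_range, Real.iSup_pow (fun n => by positivity),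
    czeroUnitPow_mk, czeroUnitNorm_eq_iSup]
  · simp only [hkey]
  · simpa only [hkey] using (hmax.pow k).bddAbove_range

/-- The norm on the unitization `c₀⁺ = K ⊕ c₀`, `‖(α,a)‖ = max(|α|, ‖a‖_∞)`,
is power multiplicative: for every `(α, a) ∈ c₀⁺` and every `k ≥ 1`,
`‖(α,a)^k‖ = ‖(α,a)‖^k`. -/
theorem czeroUnit_norm_pow {K : Type*} [NontriviallyNormedField K] [IsUltrametricDist K]
    (α : K) (a : ℕ → K) (ha : Tendsto a atTop (nhds 0)) (k : ℕ) (hk : 1 ≤ k) :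
    czeroUnitNorm (czeroUnitPow (α, a) k) = czeroUnitNorm (α, a) ^ k :=
  czeroUnit_norm_pow_general α a ha k
end

section
/- For z ∉ σ(T) (the set of eigenvalues of T together with 0), the resolvent R_z(T) = (zI - T)⁻¹ belongs to the closed unital subalgebra of bounded operators on c₀ generated by T: it is the limit in operator norm of polynomials in T. -/
/-!
Choose a polynomial `q` with `q(z) = 1` and `‖q(λₙ)‖ ≤ 1/2` for all `n`: it vanishes at
`λ₀, …, λ_{N-1}`, beyond which `‖λₙ‖ ≤ ‖z‖/2`, and a factor `(x/z)^m` makes it small on the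
remaining eigenvalues. Writing `1 - q = (z - X) p`, the operator `(zI - T) p(T) = 1 - q(T)`
is within `1/2` of the identity, because a diagonal operator has norm at most the supremum of its
multipliers. The Neumann series inverts it inside the closed algebra generated by `T`, and since
`zI - T` and `p(T)` commute, `zI - T` is invertible there as well.
-/

open Filter
open scoped ZeroAtInfty

/-- The operator algebra on `c₀` is a normed ring (restated locally to help
typeclass inference). -/
noncomputable instance (priority := 10000) {K : Type*} [NontriviallyNormedField K] :
    NormedRing (C₀(ℕ, K) →L[K] C₀(ℕ, K)) :=
  ContinuousLinearMap.toNormedRing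

open Polynomial

section NeumannSeries

variable {R S : Type*} [NormedRing R] [HasSummableGeomSeries R] [SetLike S R] [SubringClass S R]
  {s : S}

theorem Ring.inverse_mem_of_norm_one_sub_lt_one (hs : IsClosed (s : Set R)) {x : R}
    (hx : x ∈ s) (h : ‖1 - x‖ < 1) : Ring.inverse x ∈ s := by
  rw [← sub_sub_cancel 1 x, ← geom_series_eq_inverse (1 - x) h]
  exact tsum_mem hs fun i => pow_mem (sub_mem (one_mem s) hx) i

theorem isUnit_and_inverse_mem_of_norm_one_sub_mul_lt_one (hs : IsClosed (s : Set R))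
    {a b : R} (ha : a ∈ s) (hb : b ∈ s) (hab : Commute a b) (h : ‖1 - a * b‖ < 1) :
    IsUnit a ∧ Ring.inverse a ∈ s := by
  have hunit : IsUnit (a * b) := by
    simpa using isUnit_one_sub_of_norm_lt_one h
  obtain ⟨ha_unit, hb_unit⟩ := hab.isUnit_mul_iff.1 hunit
  have hinv : Ring.inverse a = b * Ring.inverse (a * b) := by
    rw [Ring.mul_inverse_rev' hab, Ring.mul_inverse_cancel_left b _ hb_unit]
  exact ⟨ha_unit, hinv ▸ mul_mem hb
    (Ring.inverse_mem_of_norm_one_sub_lt_one hs (mul_mem ha hb) h)⟩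

end NeumannSeries

section PeakPolynomial

variable {K : Type*} [NormedField K]

theorem Polynomial.exists_eval_eq_one_and_eval_eq_zero {ι : Type*} {s : Finset ι} {f : ι → K}
    {z : K} (hz : ∀ i ∈ s, f i ≠ z) : ∃ p : K[X], p.eval z = 1 ∧ ∀ i ∈ s, p.eval (f i) = 0 := by
  have hne : ∏ i ∈ s, (z - f i) ≠ 0 :=
    Finset.prod_ne_zero_iff.2 fun i hi => sub_ne_zero.2 (hz i hi).symm
  refine ⟨C (∏ i ∈ s, (z - f i))⁻¹ * ∏ i ∈ s, (X - C (f i)), ?_, fun i hi => ?_⟩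
  · simp [eval_prod, inv_mul_cancel₀ hne]
  · simp [eval_prod, Finset.prod_eq_zero (f := fun j => f i - f j) hi (sub_self (f i))]

theorem Polynomial.exists_eval_eq_one_and_norm_eval_le_of_tendsto_zero {l : ℕ → K}
    (hl : Tendsto l atTop (nhds 0)) {z : K} (hz0 : z ≠ 0) (hzl : ∀ n, l n ≠ z) {ε : ℝ}
    (hε : 0 < ε) : ∃ q : K[X], q.eval z = 1 ∧ ∀ n, ‖q.eval (l n)‖ ≤ ε := by
  obtain ⟨N, hN⟩ : ∃ N, ∀ n ≥ N, ‖l n‖ ≤ ‖z‖ / 2 :=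
    eventually_atTop.1 <| (tendsto_zero_iff_norm_tendsto_zero.1 hl).eventually
      (ge_mem_nhds (half_pos (norm_pos_iff.2 hz0)))
  obtain ⟨p, hpz, hp⟩ := exists_eval_eq_one_and_eval_eq_zero (s := Finset.range N)
    fun n _ => hzl n
  obtain ⟨M, hM⟩ := ((p.continuous.tendsto 0).comp hl).norm.bddAbove_range
  obtain ⟨m, hm⟩ : ∃ m : ℕ, (1 / 2 : ℝ) ^ m * M ≤ ε := by
    have h := (tendsto_pow_atTop_nhds_zero_of_lt_one (by norm_num : (0 : ℝ) ≤ 1 / 2)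
      (by norm_num)).mul_const M
    rw [zero_mul] at h
    exact (h.eventually (ge_mem_nhds hε)).exists
  refine ⟨(C z⁻¹ * X) ^ m * p, by simp [inv_mul_cancel₀ hz0, hpz], fun n => ?_⟩
  rcases lt_or_ge n N with hn | hn
  · simp [hp n (Finset.mem_range.2 hn), hε.le]
  · have hratio : ‖z⁻¹ * l n‖ ≤ 1 / 2 := by
      rw [norm_mul, norm_inv, inv_mul_le_iff₀ (norm_pos_iff.2 hz0)]
      linarith [hN n hn]
    calc ‖((C z⁻¹ * X) ^ m * p).eval (l n)‖ = ‖z⁻¹ * l n‖ ^ m * ‖p.eval (l n)‖ := by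
          simp [norm_pow]
      _ ≤ (1 / 2) ^ m * M := by
          gcongr
          exact hM ⟨n, rfl⟩
      _ ≤ ε := hm

end PeakPolynomial

section DiagonalOperator

variable {K : Type*} [NontriviallyNormedField K]

theorem aeval_apply_of_forall_apply_eq_mul {T : C₀(ℕ, K) →L[K] C₀(ℕ, K)} {l : ℕ → K}
    (hT : ∀ (y : C₀(ℕ, K)) (n : ℕ), T y n = l n * y n) (p : K[X]) (y : C₀(ℕ, K)) (n : ℕ) :
    aeval T p y n = p.eval (l n) * y n := by
  induction p using Polynomial.induction_on generalizing y with
  | C a => simp [Algebra.algebraMap_eq_smul_one]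
  | add p q hp hq => simp [hp, hq, add_mul]
  | monomial k a ih =>
    rw [pow_succ, ← mul_assoc, map_mul, aeval_X, mul_apply_eq_comp, ih, hT]
    simp [mul_assoc]

theorem opNorm_le_of_forall_apply_eq_mul {A : C₀(ℕ, K) →L[K] C₀(ℕ, K)} {m : ℕ → K}
    (hA : ∀ (y : C₀(ℕ, K)) (n : ℕ), A y n = m n * y n) {C : ℝ} (hC : 0 ≤ C)
    (hm : ∀ n, ‖m n‖ ≤ C) : ‖A‖ ≤ C := by
  refine A.opNorm_le_bound hC fun y => ?_
  rw [← ZeroAtInftyContinuousMap.norm_toBCF_eq_norm,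
    BoundedContinuousFunction.norm_le (by positivity)]
  intro n
  calc ‖A y n‖ = ‖m n‖ * ‖y n‖ := by rw [hA, norm_mul]
    _ ≤ C * ‖y‖ := by
      gcongr
      · exact hm n
      · rw [← ZeroAtInftyContinuousMap.norm_toBCF_eq_norm]
        exact y.toBCF.norm_coe_le_norm n

end DiagonalOperator

theorem resolvent_mem_closedAlgebra_general {K : Type*} [NontriviallyNormedField K]
    [CompleteSpace K]
    (l : ℕ → K) (hl : Tendsto l atTop (nhds 0))
    (T : C₀(ℕ, K) →L[K] C₀(ℕ, K)) (hT : ∀ (y : C₀(ℕ, K)) (n : ℕ), T y n = l n * y n)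
    (z : K) (hz : z ∉ insert (0 : K) (Set.range l)) :
    ∃ R : C₀(ℕ, K) →L[K] C₀(ℕ, K),
      R * (z • (1 : C₀(ℕ, K) →L[K] C₀(ℕ, K)) - T) = 1 ∧
      (z • (1 : C₀(ℕ, K) →L[K] C₀(ℕ, K)) - T) * R = 1 ∧
      R ∈ (Algebra.adjoin K {T}).topologicalClosure := by
  simp only [Set.mem_insert_iff, Set.mem_range, not_or, not_exists] at hz
  obtain ⟨q, hqz, hq⟩ :=
    exists_eval_eq_one_and_norm_eval_le_of_tendsto_zero hl hz.1 hz.2 one_half_pos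
  obtain ⟨p, hp⟩ : C z - X ∣ 1 - q := by
    rw [← neg_sub, neg_dvd, dvd_iff_isRoot]
    simp [hqz]
  have hzT : z • 1 - T = aeval T (C z - X) := by
    simp [Algebra.algebraMap_eq_smul_one]
  have hmem : ∀ r : K[X], aeval T r ∈ (Algebra.adjoin K {T}).topologicalClosure :=
    fun r => Subalgebra.le_topologicalClosure _ (aeval_mem_adjoin_singleton K T)
  have hnorm : ‖1 - aeval T (C z - X) * aeval T p‖ < 1 := by
    rw [← map_mul, ← hp, map_sub, map_one, sub_sub_cancel]
    exact (opNorm_le_of_forall_apply_eq_mul (aeval_apply_of_forall_apply_eq_mul hT q)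
      one_half_pos.le hq).trans_lt one_half_lt_one
  obtain ⟨hunit, hinv_mem⟩ := isUnit_and_inverse_mem_of_norm_one_sub_mul_lt_one
    (Subalgebra.isClosed_topologicalClosure _) (hmem _) (hmem p)
    ((Commute.all _ _).map (aeval T)) hnorm
  rw [hzT]
  exact ⟨Ring.inverse _, Ring.inverse_mul_cancel _ hunit, Ring.mul_inverse_cancel _ hunit, hinv_mem⟩

/-- For `z ∉ σ(T)` (the eigenvalues of the compact self-adjoint diagonal operator `T`
together with `0`), the resolvent `R_z(T) = (zI - T)⁻¹` exists and belongs to the closed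
unital subalgebra of bounded operators on `c₀` generated by `T` (the operator-norm
closure of polynomials in `T`). -/
theorem resolvent_mem_closedAlgebra {K : Type*} [NontriviallyNormedField K]
    [IsUltrametricDist K] [CompleteSpace K]
    (l : ℕ → K) (hl : Tendsto l atTop (nhds 0))
    (T : C₀(ℕ, K) →L[K] C₀(ℕ, K)) (hT : ∀ (y : C₀(ℕ, K)) (n : ℕ), T y n = l n * y n)
    (z : K) (hz : z ∉ insert (0 : K) (Set.range l)) :
    ∃ R : C₀(ℕ, K) →L[K] C₀(ℕ, K),
      R * (z • (1 : C₀(ℕ, K) →L[K] C₀(ℕ, K)) - T) = 1 ∧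
      (z • (1 : C₀(ℕ, K) →L[K] C₀(ℕ, K)) - T) * R = 1 ∧
      R ∈ (Algebra.adjoin K {T}).topologicalClosure :=
  resolvent_mem_closedAlgebra_general l hl T hT z hz
end

section
/- Let T = ∑_{i=1}^n λ_i P_i be a finite-rank operator with pairwise orthogonal idempotents P_i and pairwise distinct nonzero scalars λ_i. Then the closed algebra 𝓛_T generated by {I, T} equals the linear span of {I, P_1, ..., P_n}. In particular 𝓛_T is (n+1)-dimensional. -/
/-!
On `span {1, P_i}` multiplication is governed by `P_i P_j = δ_ij P_i`, so this span is a
finite-dimensional, hence closed, subalgebra containing `T`. Conversely `T^m P_j = λ_j^m P_j`, so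
`q(T) = ∑ q(λ_j) P_j` whenever `q(0) = 0`, and a Lagrange polynomial with `q(0) = 0`,
`q(λ_j) = δ_jk` recovers `P_k` from `T`. For the dimension, multiplying a relation
`a + ∑ b_i P_i = 0` by `P_k` gives `b_k = -a`, leaving `a (1 - ∑ P_i) = 0`; and `∑ P_i ≠ 1`
because `∑ P_i` is compact while the identity of the infinite-dimensional space `c₀` is not.
-/

open scoped ZeroAtInfty

open Polynomial Submodule

namespace OrthogonalIdempotents

variable {K A ι : Type*} [Field K] [Ring A] [Algebra K A] {e : ι → A}

section Fintype

variable [Fintype ι]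

theorem sum_smul_mul (he : OrthogonalIdempotents e) (c : ι → K) (j : ι) :
    (∑ i, c i • e i) * e j = c j • e j := by
  classical
  simp [Finset.sum_mul, he.mul_eq]

theorem aeval_sum_smul_mul (he : OrthogonalIdempotents e) (c : ι → K) (p : K[X]) (j : ι) :
    aeval (∑ i, c i • e i) p * e j = p.eval (c j) • e j := by
  induction p using Polynomial.induction_on' with
  | add p q hp hq => rw [map_add, add_mul, hp, hq, eval_add, add_smul]
  | monomial m a =>
    have hpow : (∑ i, c i • e i) ^ m * e j = c j ^ m • e j := by
      induction m with
      | zero => simp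
      | succ m ih => rw [pow_succ', mul_assoc, ih, mul_smul_comm, he.sum_smul_mul, smul_smul,
          pow_succ]
    rw [aeval_monomial, ← Algebra.smul_def, smul_mul_assoc, hpow, smul_smul, eval_monomial]

theorem aeval_sum_smul_mul_X (he : OrthogonalIdempotents e) (c : ι → K) (p : K[X]) :
    aeval (∑ i, c i • e i) (p * X) = ∑ j, (p * X).eval (c j) • e j := by
  rw [map_mul, aeval_X, Finset.mul_sum]
  refine Finset.sum_congr rfl fun j _ => ?_
  rw [mul_smul_comm, he.aeval_sum_smul_mul, smul_smul, eval_mul_X, mul_comm]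

theorem mem_adjoin_sum_smul (he : OrthogonalIdempotents e) {c : ι → K}
    (hc : Function.Injective c) (hc₀ : ∀ i, c i ≠ 0) (k : ι) :
    e k ∈ Algebra.adjoin K {∑ i, c i • e i} := by
  classical
  -- `q X` takes the value `1` at `c k` and `0` at the other `c j`, and vanishes at `0`
  set q : K[X] := C (c k)⁻¹ * Lagrange.basis Finset.univ c k
  have hq : ∀ j, (q * X).eval (c j) • e j = if j = k then e k else 0 := by
    intro j
    split_ifs with hjk
    · subst hjk
      simp [q, Lagrange.eval_basis_self hc.injOn (Finset.mem_univ _), hc₀]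
    · simp [q, Lagrange.eval_basis_of_ne (Ne.symm hjk) (Finset.mem_univ _)]
  have : aeval (∑ i, c i • e i) (q * X) = e k := by
    rw [he.aeval_sum_smul_mul_X, Finset.sum_congr rfl fun j _ => hq j, Finset.sum_ite_eq']
    exact if_pos (Finset.mem_univ k)
  rw [← this, Algebra.adjoin_singleton_eq_range_aeval]
  exact ⟨_, rfl⟩

end Fintype

theorem mul_mem_span_insert_one (he : OrthogonalIdempotents e) {x y : A}
    (hx : x ∈ span K (insert 1 (Set.range e))) (hy : y ∈ span K (insert 1 (Set.range e))) :
    x * y ∈ span K (insert 1 (Set.range e)) := by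
  have he_mem : ∀ i, e i ∈ span K (insert 1 (Set.range e)) := fun i =>
    subset_span (Set.mem_insert_of_mem _ ⟨i, rfl⟩)
  have hxy := mul_mem_mul hx hy
  rw [span_mul_span] at hxy
  refine span_le.2 ?_ hxy
  classical
  rintro _ ⟨a, ha, b, hb, rfl⟩
  rcases ha with rfl | ⟨i, rfl⟩
  · simpa using subset_span hb
  rcases hb with rfl | ⟨j, rfl⟩
  · simpa using he_mem i
  change e i * e j ∈ _
  rw [he.mul_eq]
  split_ifs
  · exact he_mem i
  · exact zero_mem _

theorem adjoin_sum_smul_eq_span [Fintype ι] (he : OrthogonalIdempotents e) {c : ι → K}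
    (hc : Function.Injective c) (hc₀ : ∀ i, c i ≠ 0) :
    Subalgebra.toSubmodule (Algebra.adjoin K {∑ i, c i • e i}) =
      span K (insert 1 (Set.range e)) := by
  have he_mem : ∀ i, e i ∈ span K (insert 1 (Set.range e)) := fun i =>
    subset_span (Set.mem_insert_of_mem _ ⟨i, rfl⟩)
  refine le_antisymm ?_ (span_le.2 ?_)
  · let S := (span K (insert 1 (Set.range e))).toSubalgebra (subset_span (Set.mem_insert _ _))
      fun _ _ => he.mul_mem_span_insert_one
    have hT : ∑ i, c i • e i ∈ S := sum_mem fun i _ => Submodule.smul_mem _ _ (he_mem i)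
    exact Subalgebra.toSubmodule.monotone (Algebra.adjoin_le (Set.singleton_subset_iff.2 hT))
  · rintro _ (rfl | ⟨k, rfl⟩)
    · exact Subalgebra.one_mem _
    · exact he.mem_adjoin_sum_smul hc hc₀ k

theorem linearIndependent_cons_one {n : ℕ} {e : Fin n → A} (he : OrthogonalIdempotents e)
    (he₀ : ∀ i, e i ≠ 0) (hsum : ∑ i, e i ≠ 1) :
    LinearIndependent K (Fin.cons 1 e : Fin (n + 1) → A) := by
  rw [Fintype.linearIndependent_iff]
  intro g hg
  rw [Fin.sum_univ_succ] at hg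
  simp only [Fin.cons_zero, Fin.cons_succ] at hg
  have hcoeff : ∀ k : Fin n, g k.succ = -g 0 := by
    intro k
    have := congrArg (· * e k) hg
    simp only [add_mul, smul_mul_assoc, one_mul, zero_mul, he.sum_smul_mul, ← add_smul,
      smul_eq_zero, he₀ k, or_false] at this
    exact eq_neg_of_add_eq_zero_right this
  have hg0 : g 0 = 0 := by
    have : g 0 • (1 - ∑ i, e i) = 0 := by
      simpa [hcoeff, smul_sub, Finset.smul_sum, sub_eq_add_neg] using hg
    simpa [sub_eq_zero, Ne.symm hsum] using this
  intro i
  induction i using Fin.cases with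
  | zero => exact hg0
  | succ k => rw [hcoeff, hg0, neg_zero]

theorem finrank_span_insert_one {n : ℕ} {e : Fin n → A} (he : OrthogonalIdempotents e)
    (he₀ : ∀ i, e i ≠ 0) (hsum : ∑ i, e i ≠ 1) :
    Module.finrank K (span K (insert 1 (Set.range e))) = n + 1 := by
  rw [← Fin.range_cons, finrank_span_eq_card (he.linearIndependent_cons_one he₀ hsum),
    Fintype.card_fin]

end OrthogonalIdempotents

namespace ZeroAtInftyContinuousMap

variable {K : Type*} [NormedField K]

theorem not_finiteDimensional_nat : ¬ FiniteDimensional K C₀(ℕ, K) := by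
  classical
  intro _
  let single (k : ℕ) : C₀(ℕ, K) :=
    ⟨⟨Pi.single k 1, continuous_of_discreteTopology⟩,
      HasCompactSupport.is_zero_at_infty <|
        .intro isCompact_singleton fun _ hm => Pi.single_eq_of_ne hm 1⟩
  let coeFn : C₀(ℕ, K) →ₗ[K] ℕ → K :=
    { toFun := (⇑), map_add' := coe_add, map_smul' := coe_smul }
  have : LinearIndependent K single :=
    LinearIndependent.of_comp coeFn (Pi.linearIndependent_single_one ℕ K)
  exact Module.Finite.not_linearIndependent_of_infinite _ this

end ZeroAtInftyContinuousMap

theorem closedAlgebra_eq_span_projections_general {K : Type*} [NontriviallyNormedField K]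
    [CompleteSpace K]
    (n : ℕ) (l : Fin n → K) (P : Fin n → (C₀(ℕ, K) →L[K] C₀(ℕ, K)))
    (hidem : ∀ i, P i * P i = P i)
    (horth : ∀ i j, i ≠ j → P i * P j = 0)
    (hPne : ∀ i, P i ≠ 0)
    (hPc : ∀ i, IsCompactOperator (P i))
    (hne : ∀ i, l i ≠ 0) (hinj : Function.Injective l)
    (T : C₀(ℕ, K) →L[K] C₀(ℕ, K)) (hTdef : T = ∑ i, l i • P i) :
    ((Algebra.adjoin K {T}).topologicalClosure :
        Set (C₀(ℕ, K) →L[K] C₀(ℕ, K))) =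
      (Submodule.span K (insert (1 : C₀(ℕ, K) →L[K] C₀(ℕ, K)) (Set.range P)) :
        Submodule K (C₀(ℕ, K) →L[K] C₀(ℕ, K))) ∧
    Module.finrank K
      (Submodule.span K (insert (1 : C₀(ℕ, K) →L[K] C₀(ℕ, K)) (Set.range P))) = n + 1 := by
  have hP : OrthogonalIdempotents P := ⟨hidem, horth⟩
  have hsum : ∑ i, P i ≠ 1 := by
    intro h
    have hid : (1 : C₀(ℕ, K) →L[K] C₀(ℕ, K)) ∈ compactOperator (RingHom.id K) _ _ :=
      h ▸ sum_mem fun i _ => hPc i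
    exact ZeroAtInftyContinuousMap.not_finiteDimensional_nat
      (FiniteDimensional.of_isCompactOperator_id (E := C₀(ℕ, K)) hid)
  have hrank := hP.finrank_span_insert_one (K := K) hPne hsum
  have : FiniteDimensional K (span K (insert 1 (Set.range P))) :=
    FiniteDimensional.span_of_finite K ((Set.finite_range P).insert 1)
  refine ⟨?_, hrank⟩
  rw [Subalgebra.topologicalClosure_coe, hTdef, ← Subalgebra.coe_toSubmodule,
    hP.adjoin_sum_smul_eq_span hinj hne]
  exact (closed_of_finiteDimensional _).closure_eq

/-- Let `T = ∑_{i=1}^n λ_i P_i` be a finite-rank (compact) operator on `c₀` with pairwise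
orthogonal nonzero idempotents `P_i` and pairwise distinct nonzero scalars `λ_i`. Then the
closed algebra `𝓛_T` generated by `{I, T}` equals the linear span of `{I, P_1, ..., P_n}`;
in particular `𝓛_T` is `(n+1)`-dimensional. -/
theorem closedAlgebra_eq_span_projections {K : Type*} [NontriviallyNormedField K]
    [IsUltrametricDist K] [CompleteSpace K]
    (n : ℕ) (l : Fin n → K) (P : Fin n → (C₀(ℕ, K) →L[K] C₀(ℕ, K)))
    (hidem : ∀ i, P i * P i = P i)
    (horth : ∀ i j, i ≠ j → P i * P j = 0)
    (hPne : ∀ i, P i ≠ 0)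
    (hPc : ∀ i, IsCompactOperator (P i))
    (hne : ∀ i, l i ≠ 0) (hinj : Function.Injective l)
    (T : C₀(ℕ, K) →L[K] C₀(ℕ, K)) (hTdef : T = ∑ i, l i • P i) :
    ((Algebra.adjoin K {T}).topologicalClosure :
        Set (C₀(ℕ, K) →L[K] C₀(ℕ, K))) =
      (Submodule.span K (insert (1 : C₀(ℕ, K) →L[K] C₀(ℕ, K)) (Set.range P)) :
        Submodule K (C₀(ℕ, K) →L[K] C₀(ℕ, K))) ∧
    Module.finrank K
      (Submodule.span K (insert (1 : C₀(ℕ, K) →L[K] C₀(ℕ, K)) (Set.range P))) = n + 1 :=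
  closedAlgebra_eq_span_projections_general n l P hidem horth hPne hPc hne hinj T hTdef
end
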